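/- Suppose Z is a Tychonoff space such that Z^n has the Menger property for every n ∈ ω, and X is a countable subspace of C_p(Z). Then for every x ∈ X the family 𝒰 = {U ⊆ X : x ∈ Int_X(U)} is Menger as a subspace of 𝒫(X), where Int_X denotes interior in the subspace topology that X inherits from C_p(Z). -/
import Mathlib


open Set Topology Filter

/-- A topological space is *Menger* if for every sequence of open covers there are finite
subfamilies whose unions form a cover. -/
def IsMenger (X : Type*) [TopologicalSpace X] : Prop :=
  ∀ U : ℕ → Set (Set X),
    (∀ n, ∀ u ∈ U n, IsOpen u) → (∀ n, ⋃₀ U n = Set.univ) →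
    ∃ V : ℕ → Set (Set X),
      (∀ n, V n ⊆ U n ∧ (V n).Finite) ∧ (⋃ n, ⋃₀ V n) = Set.univ

/-- The Menger property for a subspace. -/
def IsMengerSet {X : Type*} [TopologicalSpace X] (S : Set X) : Prop :=
  IsMenger ↥S

/-- The Cantor-space topology on the power set `𝒫(α)`, identifying a subset with its
characteristic function in the product of discrete two-point spaces. -/
def cantorTop (α : Type*) : TopologicalSpace (Set α) :=
  TopologicalSpace.induced (fun (S : Set α) (a : α) => a ∈ S)
    (@Pi.topologicalSpace α (fun _ => Prop) (fun _ => ⊥))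

/-- `C_p(X)`: continuous real-valued functions with the topology of pointwise convergence,
i.e. the subspace topology inherited from `ℝ^X`. -/
abbrev Cp (X : Type*) [TopologicalSpace X] : Type _ := {f : X → ℝ // Continuous f}

/-- The zero function as an element of `C_p(X)`. -/
instance (X : Type*) [TopologicalSpace X] : Zero (Cp X) :=
  ⟨⟨fun _ => 0, continuous_const⟩⟩

theorem isMenger_of_image {A B : Type*} [TopologicalSpace A] [TopologicalSpace B]
    {f : A → B} (hf : Continuous f) (hsurj : Function.Surjective f)
    (hA : IsMenger A) : IsMenger B := by
  intro U hop hcov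
  obtain ⟨V', hV', hcov'⟩ := hA (fun n => (fun u => f ⁻¹' u) '' U n)
    (by rintro n _ ⟨u, hu, rfl⟩; exact (hop n u hu).preimage hf)
    (by
      intro n
      apply eq_univ_of_forall
      intro a
      have : f a ∈ ⋃₀ U n := (hcov n).symm ▸ mem_univ _
      obtain ⟨u, hu, hau⟩ := this
      exact ⟨f ⁻¹' u, ⟨u, hu, rfl⟩, hau⟩)
  refine ⟨fun n => {u ∈ U n | f ⁻¹' u ∈ V' n}, fun n => ⟨fun u hu => hu.1, ?_⟩, ?_⟩
  · have : {u ∈ U n | f ⁻¹' u ∈ V' n} ⊆ (fun u => f ⁻¹' u) ⁻¹' (V' n) := fun u hu => hu.2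
    exact Set.Finite.subset (Set.Finite.preimage (hsurj.preimage_injective.injOn) (hV' n).2) this
  · apply eq_univ_of_forall
    intro b
    obtain ⟨a, rfl⟩ := hsurj b
    have : a ∈ ⋃ n, ⋃₀ V' n := hcov'.symm ▸ mem_univ _
    obtain ⟨_, ⟨n, rfl⟩, v, hv, hav⟩ := this
    obtain ⟨u, hu, rfl⟩ := (hV' n).1 hv
    exact mem_iUnion.2 ⟨n, ⟨u, ⟨hu, hv⟩, hav⟩⟩

theorem isMenger_subtype_of_ambient {B : Type*} [TopologicalSpace B] (S : Set B)
    (H : ∀ U : ℕ → Set (Set B), (∀ n, ∀ u ∈ U n, IsOpen u) → (∀ n, S ⊆ ⋃₀ U n) →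
      ∃ V : ℕ → Set (Set B), (∀ n, V n ⊆ U n ∧ (V n).Finite) ∧ S ⊆ ⋃ n, ⋃₀ V n) :
    IsMenger ↥S := by
  intro U hop hcov
  obtain ⟨V', hV', hcov'⟩ := H (fun n => {t | IsOpen t ∧ ∃ u ∈ U n, Subtype.val ⁻¹' t = u})
    (fun n t ht => ht.1)
    (by
      intro n s hs
      have : (⟨s, hs⟩ : ↥S) ∈ ⋃₀ U n := (hcov n).symm ▸ mem_univ _
      obtain ⟨u, hu, hsu⟩ := this
      obtain ⟨t, hto, htu⟩ := isOpen_induced_iff.1 (hop n u hu)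
      exact ⟨t, ⟨hto, u, hu, htu⟩, by rw [← htu] at hsu; exact hsu⟩)
  refine ⟨fun n => {u ∈ U n | ∃ t ∈ V' n, Subtype.val ⁻¹' t = u}, fun n => ⟨fun u hu => hu.1, ?_⟩, ?_⟩
  · have : {u ∈ U n | ∃ t ∈ V' n, Subtype.val ⁻¹' t = u} ⊆ (fun t => (Subtype.val ⁻¹' t : Set ↥S)) '' (V' n) := by
      rintro u ⟨hu, t, htv, rfl⟩; exact ⟨t, htv, rfl⟩
    exact Set.Finite.subset ((hV' n).2.image _) this
  · apply eq_univ_of_forall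
    rintro ⟨s, hs⟩
    obtain ⟨_, ⟨n, rfl⟩, t, htv, hst⟩ := hcov' hs
    obtain ⟨hto, u, hu, htu⟩ := (hV' n).1 htv
    refine mem_iUnion.2 ⟨n, u, ⟨hu, t, htv, htu⟩, ?_⟩
    rw [← htu]; exact hst

lemma cylinder_isOpen {A : Type*} {d : Set A} (hd : d.Finite) (g : A → Bool) :
    IsOpen {g' : A → Bool | ∀ a ∈ d, g' a = g a} := by
  have : {g' : A → Bool | ∀ a ∈ d, g' a = g a} = ⋂ a ∈ d, (fun g' : A → Bool => g' a) ⁻¹' {g a} := by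
    ext g'; simp [Set.mem_iInter]
  rw [this]
  exact hd.isOpen_biInter fun a _ => (continuous_apply a).isOpen_preimage _ (isOpen_discrete _)

lemma exists_cylinder {A : Type*} {O : Set (A → Bool)} (hO : IsOpen O) {g : A → Bool} (hg : g ∈ O) :
    ∃ d : Set A, d.Finite ∧ {g' | ∀ a ∈ d, g' a = g a} ⊆ O := by
  have hOn : O ∈ 𝓝 g := hO.mem_nhds hg
  rw [nhds_pi, Filter.mem_pi'] at hOn
  obtain ⟨I, t, ht, hsub⟩ := hOn
  refine ⟨↑I, I.finite_toSet, fun g' hg' => hsub fun a ha => ?_⟩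
  have := hg' a ha
  rw [this]
  exact mem_of_mem_nhds (ht a)

lemma compact_avoid {A : Type*} (W : Set A) :
    IsCompact {g : A → Bool | ∀ a ∈ W, g a = false} := by
  have hc : IsClosed {g : A → Bool | ∀ a ∈ W, g a = false} := by
    have : {g : A → Bool | ∀ a ∈ W, g a = false} = ⋂ a ∈ W, (fun g : A → Bool => g a) ⁻¹' {false} := by
      ext g'; simp [Set.mem_iInter]
    rw [this]
    exact isClosed_biInter fun a _ => (isClosed_discrete _).preimage (continuous_apply a)
  exact hc.isCompact


section CpStuff
variable {Z : Type*} [TopologicalSpace Z] {X : Set (Cp Z)}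

lemma exists_basic_nhd (x : ↥X) {O : Set ↥X} (hO : O ∈ 𝓝 x) :
    ∃ (I : Finset Z) (ε : ℝ), 0 < ε ∧
      {y : ↥X | ∀ z ∈ I, |y.1.1 z - x.1.1 z| < ε} ⊆ O := by
  obtain ⟨x', hx'⟩ := x
  rw [nhds_subtype_eq_comap, Filter.mem_comap] at hO
  obtain ⟨S, hS, hSO⟩ := hO
  obtain ⟨f, hf⟩ := x'
  rw [nhds_subtype_eq_comap, Filter.mem_comap] at hS
  obtain ⟨T, hT, hTS⟩ := hS
  rw [nhds_pi, Filter.mem_pi'] at hT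
  obtain ⟨I, t, ht, hsub⟩ := hT
  have hball : ∀ z : Z, ∃ ε > 0, Metric.ball (f z) ε ⊆ t z := fun z =>
    Metric.mem_nhds_iff.1 (ht z)
  choose εf hεf hballsub using hball
  classical
  set ε₀ : ℝ := if h : I.Nonempty then I.inf' h εf else 1 with hε₀
  have hε₀pos : 0 < ε₀ := by
    rw [hε₀]; split
    · next h => exact (Finset.lt_inf'_iff h).2 fun z _ => hεf z
    · norm_num
  refine ⟨I, ε₀, hε₀pos, fun y hy => ?_⟩
  apply hSO
  apply hTS
  have : y.1.1 ∈ Set.pi (↑I) t := by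
    intro z hz
    apply hballsub z
    rw [Metric.mem_ball, Real.dist_eq]
    calc |y.1.1 z - f z| < ε₀ := hy z hz
    _ ≤ εf z := by
        rw [hε₀]; rw [dif_pos ⟨z, hz⟩]; exact Finset.inf'_le _ hz
  exact hsub this

lemma fan_tightness_finite (x : ↥X) (hMenger : ∀ n : ℕ, IsMenger (Fin n → Z))
    (𝒜 : ℕ → Set (Set ↥X))
    (hfin : ∀ n, ∀ E ∈ 𝒜 n, E.Finite)
    (hdense : ∀ n, ∀ O ∈ 𝓝 x, ∃ E ∈ 𝒜 n, E ⊆ O) :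
    ∃ ℬ : ℕ → Set (Set ↥X), (∀ n, ℬ n ⊆ 𝒜 n ∧ (ℬ n).Finite) ∧
      ∀ O ∈ 𝓝 x, ∃ n, ∃ E ∈ ℬ n, E ⊆ O := by
  classical
  set WSet : (k : ℕ) → Set ↥X → Set (Fin k → Z) :=
    fun k E => {z | ∀ f ∈ E, ∀ i, |f.1.1 (z i) - x.1.1 (z i)| < 1/(k+1)} with hWSet
  have hεk : ∀ k : ℕ, (0:ℝ) < 1/(k+1) := fun k => by positivity
  -- apply Menger for each k
  have hMk : ∀ k : ℕ, ∃ Vsel : ℕ → Set (Set (Fin k → Z)),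
      (∀ m, Vsel m ⊆ (WSet k) '' (𝒜 (Nat.pair k m)) ∧ (Vsel m).Finite) ∧
      (⋃ m, ⋃₀ Vsel m) = Set.univ := by
    intro k
    apply hMenger k (fun m => (WSet k) '' (𝒜 (Nat.pair k m)))
    · rintro m _ ⟨E, hE, rfl⟩
      have heq : WSet k E =
          ⋂ f ∈ E, ⋂ i, {z : Fin k → Z | |f.1.1 (z i) - x.1.1 (z i)| < 1/(k+1)} := by
        ext z; simp [hWSet, Set.mem_iInter]
      rw [heq]
      apply (hfin _ E hE).isOpen_biInter
      intro f _
      apply isOpen_iInter_of_finite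
      intro i
      exact isOpen_lt
        (((f.1.2.comp (continuous_apply i)).sub (x.1.2.comp (continuous_apply i))).abs)
        continuous_const
    · intro m
      apply eq_univ_of_forall
      intro z
      have hOz : {y : ↥X | ∀ i, |y.1.1 (z i) - x.1.1 (z i)| < 1/(k+1)} ∈ 𝓝 x := by
        have hopen : IsOpen {y : ↥X | ∀ i, |y.1.1 (z i) - x.1.1 (z i)| < 1/(k+1)} := by
          have heq : {y : ↥X | ∀ i, |y.1.1 (z i) - x.1.1 (z i)| < 1/(k+1)} =
              ⋂ i, {y : ↥X | |y.1.1 (z i) - x.1.1 (z i)| < 1/(k+1)} := by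
            ext y; simp [Set.mem_iInter]
          rw [heq]
          apply isOpen_iInter_of_finite
          intro i
          apply isOpen_lt _ continuous_const
          have hc : Continuous fun y : ↥X => y.1.1 (z i) :=
            (continuous_apply (z i)).comp (continuous_subtype_val.comp continuous_subtype_val)
          exact (hc.sub continuous_const).abs
        apply hopen.mem_nhds
        intro i
        simp only [Set.mem_setOf_eq, sub_self, abs_zero]
        exact hεk k
      obtain ⟨E, hE, hEsub⟩ := hdense (Nat.pair k m) _ hOz
      exact ⟨WSet k E, ⟨E, hE, rfl⟩, fun f hf i => hEsub hf i⟩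
  choose Vsel hVsel hVcov using hMk
  -- extract finite subfamilies of 𝒜
  have hsel : ∀ k m, ∃ B : Set (Set ↥X), B.Finite ∧ B ⊆ 𝒜 (Nat.pair k m) ∧
      ∀ u ∈ Vsel k m, ∃ E ∈ B, WSet k E = u := by
    intro k m
    choose! F hF1 hF2 using fun u (hu : u ∈ Vsel k m) => (hVsel k m).1 hu
    refine ⟨F '' Vsel k m, (hVsel k m).2.image F, ?_, fun u hu => ⟨F u, ⟨u, hu, rfl⟩, hF2 u hu⟩⟩
    rintro _ ⟨u, hu, rfl⟩
    exact hF1 u hu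
  choose Bsel hB1 hB2 hB3 using hsel
  have hE₀ : ∀ n, ∃ E, E ∈ 𝒜 n := fun n => by
    obtain ⟨E, hE, -⟩ := hdense n Set.univ univ_mem
    exact ⟨E, hE⟩
  choose E₀ hE₀mem using hE₀
  set ℬ : ℕ → Set (Set ↥X) := fun n =>
    Bsel (Nat.unpair n).1 (Nat.unpair n).2 ∪ {E₀ n} with hℬ
  have hℬsub : ∀ n, ℬ n ⊆ 𝒜 n := by
    intro n E hE
    rcases hE with hE | hE
    · have h2 := hB2 (Nat.unpair n).1 (Nat.unpair n).2
      rw [Nat.pair_unpair] at h2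
      exact h2 hE
    · rw [hE]; exact hE₀mem n
  refine ⟨ℬ, fun n => ⟨hℬsub n, (hB1 _ _).union (finite_singleton _)⟩, ?_⟩
  intro O hO
  obtain ⟨I, ε, hε, hsub⟩ := exists_basic_nhd x hO
  by_cases hI : I.Nonempty
  · obtain ⟨z₀, hz₀⟩ := hI
    obtain ⟨k₁, hk₁⟩ : ∃ k₁ : ℕ, 1/(k₁+1 : ℝ) < ε := exists_nat_one_div_lt hε
    set k := max I.card k₁ with hk
    have hσ : ∃ σ : Fin k → Z, ∀ z ∈ I, ∃ i, σ i = z := by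
      refine ⟨fun i => I.toList.getD i z₀, fun z hz => ?_⟩
      have hzl : z ∈ I.toList := Finset.mem_toList.2 hz
      obtain ⟨j, hj, hjz⟩ := List.mem_iff_getElem.1 hzl
      have hjI : j < I.card := by rwa [Finset.length_toList] at hj
      have hjk : j < k := lt_of_lt_of_le hjI (le_max_left _ _)
      refine ⟨⟨j, hjk⟩, ?_⟩
      show I.toList.getD j z₀ = z
      rw [List.getD_eq_getElem _ _ hj]
      exact hjz
    obtain ⟨σ, hσ⟩ := hσ
    have hzstar : σ ∈ ⋃ m, ⋃₀ Vsel k m := (hVcov k).symm ▸ mem_univ _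
    obtain ⟨_, ⟨m, rfl⟩, u, hu, hσu⟩ := hzstar
    obtain ⟨E, hEB, hEW⟩ := hB3 k m u hu
    refine ⟨Nat.pair k m, E, ?_, ?_⟩
    · rw [hℬ]
      simp only [Nat.unpair_pair]
      exact Set.mem_union_left _ hEB
    · intro f hf
      apply hsub
      intro z hz
      obtain ⟨i, rfl⟩ := hσ z hz
      have hmem : σ ∈ WSet k E := by rw [hEW]; exact hσu
      have hlt := hmem f hf i
      calc |f.1.1 (σ i) - x.1.1 (σ i)| < 1/(k+1) := hlt
        _ ≤ 1/(k₁+1) := by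
            apply one_div_le_one_div_of_le (by positivity)
            have : (k₁ : ℝ) ≤ k := by exact_mod_cast le_max_right I.card k₁
            linarith
        _ < ε := hk₁
  · refine ⟨0, E₀ 0, Set.mem_union_right _ rfl, fun y hy => hsub ?_⟩
    intro z hz
    exact absurd ⟨z, hz⟩ hI

lemma gset_menger (x : ↥X) (hMenger : ∀ n : ℕ, IsMenger (Fin n → Z)) :
    IsMenger ↥{g : ↥X → Bool | x ∉ closure {a | g a = true}} := by
  classical
  set G : Set (↥X → Bool) := {g | x ∉ closure {a | g a = true}} with hG
  apply isMenger_subtype_of_ambient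
  intro U hop hcov
  -- Step 1
  have step1 : ∀ n, ∀ W ∈ 𝓝 x, ∃ 𝒱, 𝒱 ⊆ U n ∧ 𝒱.Finite ∧ ∃ d : Set ↥X, d.Finite ∧
      ∀ g : ↥X → Bool, (∀ a ∈ d, a ∈ W → g a = false) → g ∈ ⋃₀ 𝒱 := by
    intro n W hW
    set K : Set (↥X → Bool) := {g | ∀ a ∈ W, g a = false} with hK
    have hKG : K ⊆ G := by
      intro g hg
      simp only [hG, Set.mem_setOf_eq]
      intro hx
      obtain ⟨a, haW, haA⟩ := mem_closure_iff_nhds.1 hx W hW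
      have := hg a haW
      rw [haA] at this
      simp at this
    have hKcov : K ⊆ ⋃₀ U n := fun g hg => hcov n (hKG hg)
    have hcyl : ∀ g ∈ K, ∃ (u : Set (↥X → Bool)) (d : Set ↥X), u ∈ U n ∧ d.Finite ∧
        {g' | ∀ a ∈ d, g' a = g a} ⊆ u := by
      intro g hg
      obtain ⟨u, hu, hgu⟩ := hKcov hg
      obtain ⟨d, hd, hdsub⟩ := exists_cylinder (hop n u hu) hgu
      exact ⟨u, d, hu, hd, hdsub⟩
    choose! uf df h1 h2 h3 using hcyl
    obtain ⟨b', hb'sub, hb'fin, hb'cov⟩ := (compact_avoid W).elim_finite_subcover_image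
      (b := K) (c := fun g => {g' | ∀ a ∈ df g, g' a = g a})
      (fun g hg => cylinder_isOpen (h2 g hg) g)
      (fun g hg => Set.mem_biUnion hg (fun a _ => rfl))
    refine ⟨uf '' b', ?_, hb'fin.image _, ⋃ g ∈ b', df g,
      hb'fin.biUnion (fun g hg => h2 g (hb'sub hg)), ?_⟩
    · rintro _ ⟨g, hg, rfl⟩
      exact h1 g (hb'sub hg)
    · intro g hgd
      set g' : ↥X → Bool := fun a => if a ∈ W then false else g a with hg'
      have hg'K : g' ∈ K := fun a ha => by
        show (if a ∈ W then false else g a) = false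
        rw [if_pos ha]
      obtain ⟨g₀, hg₀, hg'c⟩ := Set.mem_iUnion₂.1 (hb'cov hg'K)
      refine ⟨uf g₀, ⟨g₀, hg₀, rfl⟩, h3 g₀ (hb'sub hg₀) ?_⟩
      intro a ha
      have hga : g a = g' a := by
        show g a = if a ∈ W then false else g a
        by_cases haW : a ∈ W
        · rw [if_pos haW]
          exact hgd a (Set.mem_biUnion hg₀ ha) haW
        · rw [if_neg haW]
      rw [hga]
      exact hg'c a ha
  -- Step 2: families of finite sets
  set 𝒜 : ℕ → Set (Set ↥X) := fun n =>
    {E | E.Finite ∧ ∃ 𝒱, 𝒱 ⊆ U n ∧ 𝒱.Finite ∧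
      ∀ g : ↥X → Bool, (∀ a ∈ E, g a = false) → g ∈ ⋃₀ 𝒱} with h𝒜
  have hdense : ∀ n, ∀ O ∈ 𝓝 x, ∃ E ∈ 𝒜 n, E ⊆ O := by
    intro n O hO
    obtain ⟨𝒱, h𝒱U, h𝒱fin, d, hdfin, hprop⟩ := step1 n O hO
    refine ⟨d ∩ O, ⟨hdfin.inter_of_left _, 𝒱, h𝒱U, h𝒱fin, ?_⟩, Set.inter_subset_right⟩
    intro g hg
    exact hprop g (fun a had haO => hg a ⟨had, haO⟩)
  obtain ⟨ℬ, hℬ, hℬcov⟩ := fan_tightness_finite x hMenger 𝒜 (fun n E hE => hE.1) hdense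
  choose! Vof hV1 hV2 hV3 using fun n E (hE : E ∈ 𝒜 n) => hE.2
  refine ⟨fun n => ⋃ E ∈ ℬ n, Vof n E, fun n => ⟨?_, ?_⟩, ?_⟩
  · intro u hu
    obtain ⟨E, hE, hu⟩ := Set.mem_iUnion₂.1 hu
    exact hV1 n E ((hℬ n).1 hE) hu
  · exact (hℬ n).2.biUnion (fun E hE => hV2 n E ((hℬ n).1 hE))
  · intro g hg
    have hO : (closure {a | g a = true})ᶜ ∈ 𝓝 x :=
      (isClosed_closure.isOpen_compl).mem_nhds hg
    obtain ⟨n, E, hEB, hEO⟩ := hℬcov _ hO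
    have hgE : ∀ a ∈ E, g a = false := by
      intro a ha
      have : a ∉ closure {a | g a = true} := hEO ha
      have h2 : a ∉ {a | g a = true} := fun h => this (subset_closure h)
      simpa using h2
    have := hV3 n E ((hℬ n).1 hEB) g hgE
    obtain ⟨v, hv, hgv⟩ := this
    exact Set.mem_iUnion.2 ⟨n, v, Set.mem_iUnion₂.2 ⟨E, hEB, hv⟩, hgv⟩


end CpStuff

/-- if `Z` is Tychonoff with all finite powers Menger and `X` is a countable
subspace of `C_p(Z)`, then for every `x ∈ X` the family `{U ⊆ X : x ∈ Int_X(U)}` is Menger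
as a subspace of `𝒫(X)` with the Cantor-space topology. -/
theorem cp_all_points_family_menger (Z : Type*) [TopologicalSpace Z] [T35Space Z]
    (hMenger : ∀ n : ℕ, IsMenger (Fin n → Z))
    (X : Set (Cp Z)) (hX : X.Countable) (x : ↥X) :
    @IsMengerSet (Set ↥X) (cantorTop ↥X)
      {U : Set ↥X | x ∈ interior U} := by
  classical
  letI : TopologicalSpace (Set ↥X) := cantorTop ↥X
  letI tP : TopologicalSpace Prop := ⊥
  set G : Set (↥X → Bool) := {g | x ∉ closure {a | g a = true}} with hG
  have hψ₀ : Continuous (fun g : ↥X → Bool => ({a | g a = false} : Set ↥X)) := by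
    apply continuous_induced_rng.2
    apply continuous_pi
    intro a
    exact (continuous_of_discreteTopology (f := fun b : Bool => (b = false))).comp
      (continuous_apply a)
  have hmap : ∀ g : ↥X → Bool, g ∈ G → ({a | g a = false} : Set ↥X) ∈
      {U : Set ↥X | x ∈ interior U} := by
    intro g hg
    have h1 : ({a | g a = false} : Set ↥X) = {a | g a = true}ᶜ := by
      ext a
      rw [Set.mem_setOf_eq, Set.mem_compl_iff, Set.mem_setOf_eq, Bool.eq_false_iff]
    simp only [Set.mem_setOf_eq, h1, interior_compl]
    exact hg
  set f : ↥G → ↥{U : Set ↥X | x ∈ interior U} :=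
    fun g => ⟨{a | g.1 a = false}, hmap g.1 g.2⟩ with hf
  have hcont : Continuous f := (hψ₀.comp continuous_subtype_val).subtype_mk _
  have hsurj : Function.Surjective f := by
    rintro ⟨U, hU⟩
    refine ⟨⟨fun a => decide (a ∉ U), ?_⟩, ?_⟩
    · simp only [hG, Set.mem_setOf_eq]
      have : {a : ↥X | decide (a ∉ U) = true} = Uᶜ := by
        ext a
        rw [Set.mem_setOf_eq, decide_eq_true_eq]
        exact Iff.rfl
      rw [this, closure_compl]
      simpa using hU
    · apply Subtype.ext
      show {a : ↥X | decide (a ∉ U) = false} = U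
      ext a
      rw [Set.mem_setOf_eq, decide_eq_false_iff_not, not_not]
  exact isMenger_of_image hcont hsurj (gset_menger x hMenger)
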